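/- arXiv:2211.07631 — 3 statements merged into one kernel-verified Lean document; each statement's English description precedes it below -/
import Mathlib

section
/- If an operation (c, v) commutes with every operation occurring in a history h (in the sense of two-element history equivalence), then (c, v) is h-voidable: for every state q, if [(c,v)] ++ h is a legal history from q, then h is a legal history from q. -/
universe u v

variable {Q : Type u} {Op : Type v}

inductive Legal (Δ : Op → Q → Q → Prop) : Q → List Op → Q → Prop
  | nil (q : Q) : Legal Δ q [] q
  | snoc {q q' q'' : Q} {h : List Op} {op : Op} :
      Legal Δ q h q' → Δ op q' q'' → Legal Δ q (h ++ [op]) q''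

def LegalFrom (Δ : Op → Q → Q → Prop) (q : Q) (h : List Op) : Prop :=
  ∃ q', Legal Δ q h q'

def HEquiv (Δ : Op → Q → Q → Prop) (h₁ h₂ : List Op) : Prop :=
  ∀ q q' : Q, Legal Δ q h₁ q' ↔ Legal Δ q h₂ q'

def Commutes (Δ : Op → Q → Q → Prop) (op₁ op₂ : Op) : Prop :=
  HEquiv Δ [op₁, op₂] [op₂, op₁]

def Voidable (Δ : Op → Q → Q → Prop) (op : Op) (h : List Op) : Prop :=
  ∀ q : Q, LegalFrom Δ q (op :: h) → LegalFrom Δ q h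

theorem legal_inv {Δ : Op → Q → Q → Prop} {q q' : Q} {l : List Op}
    (hl : Legal Δ q l q') :
    (l = [] → q = q') ∧
    (∀ t a, l = t ++ [a] → ∃ m, Legal Δ q t m ∧ Δ a m q') := by
  cases hl with
  | nil =>
    refine ⟨fun _ => rfl, fun t a heq => absurd heq.symm (by simp)⟩
  | snoc hpre hst =>
    refine ⟨fun heq => absurd heq (by simp), fun t a heq => ?_⟩
    obtain ⟨h1, h2⟩ := List.append_inj' heq.symm rfl
    obtain rfl : a = _ := by simpa using h2
    subst h1
    exact ⟨_, hpre, hst⟩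

theorem legal_nil_inv {Δ : Op → Q → Q → Prop} {q q' : Q}
    (hl : Legal Δ q [] q') : q = q' := (legal_inv hl).1 rfl

theorem legal_snoc_inv {Δ : Op → Q → Q → Prop} {q q' : Q} {t : List Op} {a : Op}
    (hl : Legal Δ q (t ++ [a]) q') : ∃ m, Legal Δ q t m ∧ Δ a m q' :=
  (legal_inv hl).2 t a rfl

theorem legal_append {Δ : Op → Q → Q → Prop} {q q' : Q} {h₁ h₂ : List Op} :
    Legal Δ q (h₁ ++ h₂) q' ↔ ∃ m, Legal Δ q h₁ m ∧ Legal Δ m h₂ q' := by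
  induction h₂ using List.reverseRecOn generalizing q' with
  | nil =>
    simp only [List.append_nil]
    constructor
    · exact fun hl => ⟨q', hl, Legal.nil q'⟩
    · rintro ⟨m, hm, hnil⟩
      obtain rfl := legal_nil_inv hnil
      exact hm
  | append_singleton t a ih =>
    constructor
    · intro hl
      rw [← List.append_assoc] at hl
      obtain ⟨m2, hpre, hst⟩ := legal_snoc_inv hl
      obtain ⟨m, hm1, hm2⟩ := ih.mp hpre
      exact ⟨m, hm1, Legal.snoc hm2 hst⟩
    · rintro ⟨m, hm1, hm2⟩
      obtain ⟨m2, hpre, hst⟩ := legal_snoc_inv hm2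
      rw [← List.append_assoc]
      exact Legal.snoc (ih.mpr ⟨m, hm1, hpre⟩) hst

theorem hequiv_push {Δ : Op → Q → Q → Prop} {op : Op} {h : List Op}
    (hcomm : ∀ op' ∈ h, Commutes Δ op op') :
    HEquiv Δ (op :: h) (h ++ [op]) := by
  induction h using List.reverseRecOn with
  | nil => intro q q'; simp
  | append_singleton t a ih =>
    intro q q'
    have hca : Commutes Δ op a := hcomm a (by simp)
    have iht := ih (fun op' hm => hcomm op' (by simp [hm]))
    constructor
    · intro hl
      have : Legal Δ q ((op :: t) ++ [a]) q' := by simpa using hl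
      obtain ⟨m, hm1, hm2⟩ := legal_append.mp this
      have hm1' : Legal Δ q (t ++ [op]) m := (iht q m).mp hm1
      obtain ⟨m2, hm21, hm22⟩ := legal_append.mp hm1'
      have : Legal Δ m2 [op, a] q' := by
        have : Legal Δ m2 ([op] ++ [a]) q' := legal_append.mpr ⟨m, hm22, hm2⟩
        simpa using this
      have hswap : Legal Δ m2 ([a] ++ [op]) q' := by
        have := (hca m2 q').mp this; simpa using this
      have : Legal Δ q (t ++ ([a] ++ [op])) q' := legal_append.mpr ⟨m2, hm21, hswap⟩
      simpa [List.append_assoc] using this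
    · intro hl
      have : Legal Δ q (t ++ ([a] ++ [op])) q' := by simpa [List.append_assoc] using hl
      obtain ⟨m2, hm21, hswap⟩ := legal_append.mp this
      have : Legal Δ m2 ([op] ++ [a]) q' := by
        have := (hca m2 q').mpr (by simpa using hswap); simpa using this
      obtain ⟨m, hm22, hm2⟩ := legal_append.mp this
      have hm1' : Legal Δ q (t ++ [op]) m := legal_append.mpr ⟨m2, hm21, hm22⟩
      have hm1 : Legal Δ q (op :: t) m := (iht q m).mpr hm1'
      have : Legal Δ q ((op :: t) ++ [a]) q' := legal_append.mpr ⟨m, hm1, hm2⟩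
      simpa using this

/-- If an operation commutes with every operation of a history, it is voidable
with respect to that history. -/
theorem commutes_all_implies_voidable (Δ : Op → Q → Q → Prop)
    (op : Op) (h : List Op)
    (hcomm : ∀ op' ∈ h, Commutes Δ op op') :
    Voidable Δ op h := by
  rintro q ⟨q', hl⟩
  have := (hequiv_push hcomm q q').mp hl
  obtain ⟨m, hm1, _⟩ := legal_append.mp this
  exact ⟨m, hm1⟩
end

section
/- For the finite-set library specification, the operations (insert, k, false) and (delete, k, false) are h-voidable for every history h. -/
universe u v

variable {Q : Type u} {Op : Type v}

inductive SetOp : Type where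
  | ins (k : ℕ) (b : Bool)
  | del (k : ℕ) (b : Bool)

def SetOp.key : SetOp → ℕ
  | .ins k _ => k
  | .del k _ => k

def SetDelta : SetOp → Finset ℕ → Finset ℕ → Prop
  | .ins k true,  S, S' => k ∉ S ∧ S' = insert k S
  | .ins k false, S, S' => k ∈ S ∧ S' = S
  | .del k true,  S, S' => k ∈ S ∧ S' = S.erase k
  | .del k false, S, S' => k ∉ S ∧ S' = S

theorem Legal.nil_inv {Δ : Op → Q → Q → Prop} {q q' : Q} {l : List Op}
    (H : Legal Δ q l q') : l = [] → q = q' := by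
  induction H with
  | nil => intro; rfl
  | snoc _ _ _ => intro hh; simp at hh

theorem Legal.cons_inv {Δ : Op → Q → Q → Prop} {q q' : Q} {l : List Op}
    (H : Legal Δ q l q') : ∀ op h, l = op :: h →
    ∃ q₁, Δ op q q₁ ∧ Legal Δ q₁ h q' := by
  induction H with
  | nil => intro op h hh; simp at hh
  | @snoc q₁ q₂ h₀ o H1 H2 ih =>
    intro op h hh
    cases h₀ with
    | nil =>
      simp at hh
      obtain ⟨rfl, rfl⟩ := hh
      obtain rfl := H1.nil_inv rfl
      exact ⟨_, H2, Legal.nil _⟩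
    | cons a t =>
      simp at hh
      obtain ⟨rfl, rfl⟩ := hh
      obtain ⟨qm, hd, hl⟩ := ih a t rfl
      exact ⟨qm, hd, hl.snoc H2⟩

/-- Failed inserts and failed deletes are voidable for every history. -/
theorem failed_ops_voidable (k : ℕ) (h : List SetOp) :
    Voidable SetDelta (SetOp.ins k false) h ∧
    Voidable SetDelta (SetOp.del k false) h := by
  constructor <;>
  · intro q ⟨q', H⟩
    obtain ⟨q₁, hd, hl⟩ := H.cons_inv _ _ rfl
    obtain ⟨-, rfl⟩ := hd
    exact ⟨q', hl⟩
end

section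
/- In the finite-set library specification, the operation (insert, k, false) is h-voidable where h = [(delete, k, true)], yet (insert, k, false) does not commute with (delete, k, true). Hence voidability does not imply commutativity. -/
universe u v

variable {Q : Type u} {Op : Type v}

lemma legal_nil_eq {Δ : Op → Q → Q → Prop} {q q' : Q} (h : Legal Δ q [] q') : q = q' := by
  generalize hl : ([] : List Op) = l at h
  cases h with
  | nil => rfl
  | snoc h1 h2 => simp at hl

lemma legal_singleton_iff {Δ : Op → Q → Q → Prop} {op : Op} {q q' : Q} :
    Legal Δ q [op] q' ↔ Δ op q q' := by
  constructor
  · intro h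
    generalize hl : [op] = l at h
    cases h with
    | nil => simp at hl
    | snoc h1 h2 =>
      rename_i q₁ hh op'
      have h3 : hh ++ [op'] = [op] := hl.symm
      have hlen : hh.length = 0 := by
        have := congrArg List.length h3; simpa using this
      obtain rfl := List.length_eq_zero_iff.mp hlen
      simp at h3
      subst h3
      obtain rfl := legal_nil_eq h1; exact h2
  · intro h
    have := Legal.snoc (Legal.nil (Δ := Δ) q) h
    simpa using this

lemma legal_pair_iff {Δ : Op → Q → Q → Prop} {a b : Op} {q q' : Q} :
    Legal Δ q [a, b] q' ↔ ∃ m, Δ a q m ∧ Δ b m q' := by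
  constructor
  · intro h
    generalize hl : [a, b] = l at h
    cases h with
    | nil => simp at hl
    | snoc h1 h2 =>
      rename_i q₁ hh op'
      have : hh = [a] ∧ op' = b := by
        have h3 : hh ++ [op'] = [a] ++ [b] := hl.symm
        have hlen : hh.length = 1 := by
          have := congrArg List.length h3; simpa using this
        obtain ⟨x, rfl⟩ := List.length_eq_one_iff.mp hlen
        simp at h3; exact ⟨by simp [h3.1], h3.2⟩
      obtain ⟨rfl, rfl⟩ := this
      exact ⟨q₁, legal_singleton_iff.mp h1, h2⟩
  · rintro ⟨m, h1, h2⟩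
    have := Legal.snoc (legal_singleton_iff.mpr h1) h2
    simpa using this

/-- A failed insert of k is voidable w.r.t. the history consisting of a
successful delete of k, yet the two operations do not commute. -/
theorem voidable_not_commute (k : ℕ) :
    Voidable SetDelta (SetOp.ins k false) [SetOp.del k true] ∧
    ¬ Commutes SetDelta (SetOp.ins k false) (SetOp.del k true) := by
  constructor
  · intro q hq
    obtain ⟨q', hq'⟩ := hq
    rw [show (SetOp.ins k false :: [SetOp.del k true]) = [SetOp.ins k false, SetOp.del k true] from rfl,
      legal_pair_iff] at hq'
    obtain ⟨m, ⟨hk, rfl⟩, h2⟩ := hq'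
    exact ⟨_, legal_singleton_iff.mpr h2⟩
  · intro hc
    have := (hc {k} (({k} : Finset ℕ).erase k)).mp
    have hleg : Legal SetDelta {k} [SetOp.ins k false, SetOp.del k true] (({k} : Finset ℕ).erase k) :=
      legal_pair_iff.mpr ⟨{k}, ⟨by simp, rfl⟩, ⟨by simp, rfl⟩⟩
    obtain ⟨m, ⟨hk, rfl⟩, hin, _⟩ := legal_pair_iff.mp (this hleg)
    simp at hin
end
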